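/- Assume char K ≠ 2, K contains a square root of −1 (i.e., there is s ∈ K with s² = −1), and h_{e_i}² = 1 for all 1 ≤ i ≤ n. Let π be a compatible permutation with (q,a) satisfying π² = Id, and define I_1 = {i : π(i) = i, h_{e_i} = 1, a_i even}, I_3 = {i : π(i) = i, h_{e_i} = −1, a_i even}, J_3 = {i : π(i) ≠ i, h_{e_i} = −1, a_i even}. If I_1 ∪ I_3 is nonempty or the cardinality of J_3 is divisible by 4, then there exist c_1,…,c_n ∈ K such that c_i · c_{π(i)} = h_{e_i} for all i and q_π · ∏_{1 ≤ i ≤ n} c_i^{a_i−1} = 1. -/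
import Mathlib


open scoped BigOperators

noncomputable section

/-- The structure coefficient `q^⟨u|v⟩ = ∏_{i<j} q_{ij}^{u_j v_i}` for `u v : Fin n → ℤ`. -/
def qpowZ {K : Type*} [Field K] {n : ℕ} (q : Fin n → Fin n → K) (u v : Fin n → ℤ) : K :=
  ∏ i : Fin n, ∏ j : Fin n, if i < j then q i j ^ (u j * v i) else 1

/-- The `i`-th standard basis vector of `ℤ^n`. -/
def eZ {n : ℕ} (i : Fin n) : Fin n → ℤ := fun t => if t = i then 1 else 0

/-- `π` is a compatible permutation with `(q, a)`. -/
def Compatible {K : Type*} [Field K] {n : ℕ} (q : Fin n → Fin n → K) (a : Fin n → ℕ)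
    (π : Equiv.Perm (Fin n)) : Prop :=
  (∀ i, a (π i) = a i) ∧ (∀ i j, q (π i) (π j) = q j i)

/-- `h_{e_i} = ∏_{1 ≤ j ≤ n} q_{ij}^{a_j - 1}`. -/
def hei {K : Type*} [Field K] {n : ℕ} (q : Fin n → Fin n → K) (a : Fin n → ℕ)
    (i : Fin n) : K :=
  ∏ j : Fin n, q i j ^ (a j - 1)

/-- `q_π = ∏_{j<k} (q^⟨π·e_k|π·e_j⟩)^{(a_k-1)(a_j-1)}`. -/
def qPi {K : Type*} [Field K] {n : ℕ} (q : Fin n → Fin n → K) (a : Fin n → ℕ)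
    (π : Equiv.Perm (Fin n)) : K :=
  ∏ j : Fin n, ∏ k : Fin n,
    if j < k then (qpowZ q (eZ (π k)) (eZ (π j))) ^ ((a k - 1) * (a j - 1)) else 1

lemma qpow_e {K : Type*} [Field K] {n : ℕ} (q : Fin n → Fin n → K) (x y : Fin n) :
    qpowZ q (eZ x) (eZ y) = if y < x then q y x else 1 := by
  unfold qpowZ eZ
  rw [Finset.prod_eq_single y]
  · rw [Finset.prod_eq_single x]
    · simp
    · intro j _ hj
      simp [hj]
    · simp
  · intro i _ hi
    apply Finset.prod_eq_one
    intro j _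
    simp [hi]
  · simp

theorem stmt18 {K : Type*} [Field K] {n : ℕ} (hn : 1 ≤ n)
    (hchar : ringChar K ≠ 2)
    (s : K) (hs : s ^ 2 = -1)
    (q : Fin n → Fin n → K) (a : Fin n → ℕ)
    (hq0 : ∀ i j, q i j ≠ 0) (hqii : ∀ i, q i i = 1)
    (hqsym : ∀ i j, q i j * q j i = 1) (ha : ∀ i, 2 ≤ a i)
    (hh : ∀ i, (hei q a i) ^ 2 = 1)
    (π : Equiv.Perm (Fin n)) (hcomp : Compatible q a π)
    (hπ2 : ∀ i, π (π i) = i)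
    (hcond :
      ({i : Fin n | π i = i ∧ hei q a i = 1 ∧ Even (a i)} ∪
        {i : Fin n | π i = i ∧ hei q a i = -1 ∧ Even (a i)}).Nonempty ∨
      4 ∣ ({i : Fin n | π i ≠ i ∧ hei q a i = -1 ∧ Even (a i)}.ncard)) :
    ∃ c : Fin n → K,
      (∀ i, c i * c (π i) = hei q a i) ∧
      qPi q a π * ∏ i : Fin n, c i ^ (a i - 1) = 1 := by
  classical
  obtain ⟨hca, hcq⟩ := hcomp
  -- basic facts
  have hqinv : ∀ i j, q j i = (q i j)⁻¹ := fun i j =>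
    eq_inv_of_mul_eq_one_left (by rw [mul_comm]; exact hqsym i j)
  have hsign : ∀ i, hei q a i = 1 ∨ hei q a i = -1 := by
    intro i
    have h0 : (hei q a i - 1) * (hei q a i + 1) = 0 := by linear_combination hh i
    rcases mul_eq_zero.1 h0 with h | h
    · exact Or.inl (sub_eq_zero.1 h)
    · exact Or.inr (eq_neg_of_add_eq_zero_left h)
  have hHpi : ∀ i, hei q a (π i) = hei q a i := by
    intro i
    have hinv : (hei q a i)⁻¹ = hei q a i := by
      apply inv_eq_of_mul_eq_one_left
      have := hh i; rwa [sq] at this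
    have h1 : hei q a (π i) = (hei q a i)⁻¹ := by
      unfold hei
      rw [← Equiv.prod_comp π (fun j => q (π i) j ^ (a j - 1)), ← Finset.prod_inv_distrib]
      apply Finset.prod_congr rfl
      intro j _
      rw [hcq i j, hca j, hqinv i j, inv_pow]
    rw [h1, hinv]
  have haodd : ∀ i, Even (a i) ↔ Odd (a i - 1) := by
    intro i
    have h2 := ha i
    rw [Nat.even_iff, Nat.odd_iff]
    omega
  have hqfix : ∀ i j, π i = i → π j = j → q i j = q j i := by
    intro i j hi hj
    have := hcq j i; rw [hj, hi] at this; exact this.symm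
  have hqfixsq : ∀ i j, π i = i → π j = j → q i j * q i j = 1 := by
    intro i j hi hj
    have h2 : q i j * q i j = q i j * q j i := by rw [hqfix i j hi hj]
    rw [h2, hqsym i j]
  have hqcross : ∀ i j, π i = i → q i (π j) = (q i j)⁻¹ := by
    intro i j hi
    have h1 := hcq i j
    rw [hi] at h1; rw [h1, hqinv i j]
  -- fixed-point set
  set Ffix : Finset (Fin n) := Finset.univ.filter fun i => π i = i with hFfix
  -- restricted hei
  have heiF : ∀ i, π i = i → hei q a i = ∏ j ∈ Ffix, q i j ^ (a j - 1) := by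
    intro i hi
    unfold hei
    rw [← Finset.prod_filter_mul_prod_filter_not Finset.univ (fun j => π j = j)
      (fun j => q i j ^ (a j - 1))]
    have h1 : ∏ j ∈ Finset.univ.filter (fun j => ¬ π j = j), q i j ^ (a j - 1) = 1 := by
      apply Finset.prod_involution (fun j _ => π j)
      · intro j hj
        rw [hca j, hqcross i j hi, inv_pow]
        exact mul_inv_cancel₀ (pow_ne_zero _ (hq0 i j))
      · intro j hj _
        exact (Finset.mem_filter.1 hj).2
      · intro j hj
        simp only [Finset.mem_filter, Finset.mem_univ, true_and] at hj ⊢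
        rw [hπ2 j]
        exact fun e => hj e.symm
      · intro j _; exact hπ2 j
    rw [h1, mul_one]
  -- pair sets
  set f : Fin n × Fin n → K := fun p => q p.2 p.1 ^ ((a p.2 - 1) * (a p.1 - 1)) with hf
  set P0 : Finset (Fin n × Fin n) :=
    Finset.univ.filter (fun p => p.1 < p.2 ∧ π p.1 < π p.2) with hP0
  set Pf : Finset (Fin n × Fin n) :=
    Finset.univ.filter (fun p => p.1 < p.2 ∧ π p.1 = p.1 ∧ π p.2 = p.2) with hPf
  have hqPi1 : qPi q a π = ∏ p ∈ P0, f p := by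
    rw [qPi, ← Finset.prod_product', Finset.univ_product_univ, hP0, Finset.prod_filter]
    apply Finset.prod_congr rfl
    intro p _
    rw [qpow_e]
    by_cases h1 : p.1 < p.2
    · by_cases h2 : π p.1 < π p.2
      · rw [if_pos h1, if_pos h2, if_pos ⟨h1, h2⟩, hf]
        simp only
        rw [hcq]
      · rw [if_pos h1, if_neg h2, if_neg (fun hc => h2 hc.2), one_pow]
    · rw [if_neg h1, if_neg (fun hc => h1 hc.1)]
  have hqPimove : ∏ p ∈ P0.filter (fun p => ¬(π p.1 = p.1 ∧ π p.2 = p.2)), f p = 1 := by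
    apply Finset.prod_involution (fun p _ => (π p.1, π p.2))
    · intro p hp
      rw [hf]
      simp only
      rw [hca, hca, hcq p.2 p.1, ← mul_pow, hqsym p.2 p.1, one_pow]
    · intro p hp _
      intro he
      have h1 : π p.1 = p.1 ∧ π p.2 = p.2 := by
        rw [Prod.ext_iff] at he
        exact ⟨he.1, he.2⟩
      exact ((Finset.mem_filter.1 hp).2) h1
    · intro p hp
      rw [Finset.mem_filter] at hp ⊢
      obtain ⟨hp0, hnfix⟩ := hp
      rw [hP0, Finset.mem_filter] at hp0
      obtain ⟨-, h1, h2⟩ := hp0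
      constructor
      · rw [hP0, Finset.mem_filter]
        refine ⟨Finset.mem_univ _, h2, ?_⟩
        simp only [hπ2]
        exact h1
      · simp only [hπ2]
        intro hc
        exact hnfix ⟨hc.1.symm, hc.2.symm⟩
    · intro p _
      simp only [hπ2]
  have hqPi2 : qPi q a π = ∏ p ∈ Pf, f p := by
    rw [hqPi1, ← Finset.prod_filter_mul_prod_filter_not P0
      (fun p => π p.1 = p.1 ∧ π p.2 = p.2) f, hqPimove, mul_one]
    congr 1
    rw [hP0, hPf, Finset.filter_filter]
    apply Finset.filter_congr
    intro p _
    constructor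
    · rintro ⟨⟨h1, -⟩, h3, h4⟩; exact ⟨h1, h3, h4⟩
    · rintro ⟨h1, h3, h4⟩; exact ⟨⟨h1, by rw [h3, h4]; exact h1⟩, h3, h4⟩
  -- square of qPi
  set G : Fin n × Fin n → K := fun p => q p.1 p.2 ^ ((a p.2 - 1) * (a p.1 - 1)) with hG
  have hqPisq : qPi q a π * qPi q a π = ∏ i ∈ Ffix, hei q a i ^ (a i - 1) := by
    have hRHS : ∏ i ∈ Ffix, hei q a i ^ (a i - 1) = ∏ p ∈ Ffix ×ˢ Ffix, G p := by
      rw [Finset.prod_product]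
      apply Finset.prod_congr rfl
      intro i hi
      have hifix : π i = i := by rw [hFfix, Finset.mem_filter] at hi; exact hi.2
      rw [heiF i hifix, ← Finset.prod_pow]
      apply Finset.prod_congr rfl
      intro j _
      rw [hG]
      simp only
      rw [← pow_mul]
    have hsplit1 := Finset.prod_filter_mul_prod_filter_not (Ffix ×ˢ Ffix)
      (fun p => p.1 < p.2) G
    set D' := (Ffix ×ˢ Ffix).filter (fun p => ¬ p.1 < p.2) with hD'
    have hsplit2 := Finset.prod_filter_mul_prod_filter_not D' (fun p => p.2 < p.1) G
    have hdiag : ∏ p ∈ D'.filter (fun p => ¬ p.2 < p.1), G p = 1 := by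
      apply Finset.prod_eq_one
      intro p hp
      have h12 : p.1 = p.2 := by
        rw [Finset.mem_filter] at hp
        obtain ⟨hp1, h2⟩ := hp
        rw [hD', Finset.mem_filter] at hp1
        exact le_antisymm (not_lt.1 h2) (not_lt.1 hp1.2)
      rw [hG]
      simp only
      rw [h12, hqii, one_pow]
    have hD1 : (Ffix ×ˢ Ffix).filter (fun p => p.1 < p.2) = Pf := by
      ext p
      rw [hPf]
      simp only [Finset.mem_filter, Finset.mem_product, hFfix, Finset.mem_univ, true_and]
      constructor
      · rintro ⟨⟨h1, h2⟩, h3⟩; exact ⟨h3, h1, h2⟩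
      · rintro ⟨h3, h1, h2⟩; exact ⟨⟨h1, h2⟩, h3⟩
    have hA : ∏ p ∈ (Ffix ×ˢ Ffix).filter (fun p => p.1 < p.2), G p = ∏ p ∈ Pf, f p := by
      rw [hD1]
      apply Finset.prod_congr rfl
      intro p hp
      rw [hPf, Finset.mem_filter] at hp
      obtain ⟨-, -, h3, h4⟩ := hp
      rw [hG, hf]
      simp only
      rw [hqfix p.1 p.2 h3 h4]
    have hswap : ∏ p ∈ D'.filter (fun p => p.2 < p.1), G p = ∏ p ∈ Pf, f p := by
      apply Finset.prod_bij' (fun p _ => Prod.swap p) (fun p _ => Prod.swap p)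
      · intro p hp
        rw [Finset.mem_filter, hD', Finset.mem_filter, Finset.mem_product] at hp
        obtain ⟨⟨⟨hm1, hm2⟩, -⟩, hlt⟩ := hp
        rw [hFfix, Finset.mem_filter] at hm1 hm2
        rw [hPf, Finset.mem_filter]
        exact ⟨Finset.mem_univ _, hlt, hm2.2, hm1.2⟩
      · intro p hp
        rw [hPf, Finset.mem_filter] at hp
        obtain ⟨-, hlt, h3, h4⟩ := hp
        rw [Finset.mem_filter, hD', Finset.mem_filter, Finset.mem_product]
        refine ⟨⟨⟨?_, ?_⟩, not_lt.2 hlt.le⟩, hlt⟩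
        · rw [hFfix, Finset.mem_filter]; exact ⟨Finset.mem_univ _, h4⟩
        · rw [hFfix, Finset.mem_filter]; exact ⟨Finset.mem_univ _, h3⟩
      · intro p _; rfl
      · intro p _; rfl
      · intro p _
        rw [hG, hf]
        simp only [Prod.fst_swap, Prod.snd_swap]
        rw [Nat.mul_comm]
    rw [hqPi2, hRHS, ← hsplit1, ← hsplit2, hdiag, mul_one, hA, hswap]
  -- squares of candidate products
  have hW1 : (∏ i ∈ Ffix, hei q a i ^ (a i - 1)) * (∏ i ∈ Ffix, hei q a i ^ (a i - 1)) = 1 := by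
    rw [← Finset.prod_mul_distrib]
    apply Finset.prod_eq_one
    intro i _
    rw [← mul_pow, ← sq, hh i, one_pow]
  have hPsq : ∀ c : Fin n → K, (∀ i, c i * c (π i) = hei q a i) →
      (∏ i, c i ^ (a i - 1)) * (∏ i, c i ^ (a i - 1)) = ∏ i ∈ Ffix, hei q a i ^ (a i - 1) := by
    intro c hc
    have h1 : (∏ i, c i ^ (a i - 1)) = ∏ i, c (π i) ^ (a i - 1) := by
      rw [← Equiv.prod_comp π (fun i => c i ^ (a i - 1))]
      apply Finset.prod_congr rfl
      intro i _
      rw [hca i]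
    have h2 : (∏ i, c i ^ (a i - 1)) * (∏ i, c i ^ (a i - 1))
        = ∏ i, hei q a i ^ (a i - 1) := by
      nth_rewrite 2 [h1]
      rw [← Finset.prod_mul_distrib]
      apply Finset.prod_congr rfl
      intro i _
      rw [← mul_pow, hc i]
    rw [h2, ← Finset.prod_filter_mul_prod_filter_not Finset.univ (fun i => π i = i)
      (fun i => hei q a i ^ (a i - 1)), ← hFfix]
    have h3 : ∏ i ∈ Finset.univ.filter (fun i => ¬ π i = i), hei q a i ^ (a i - 1) = 1 := by
      apply Finset.prod_involution (fun i _ => π i)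
      · intro i hi
        rw [hHpi i, hca i, ← mul_pow, ← sq, hh i, one_pow]
      · intro i hi _
        exact (Finset.mem_filter.1 hi).2
      · intro i hi
        simp only [Finset.mem_filter, Finset.mem_univ, true_and] at hi ⊢
        rw [hπ2 i]
        exact fun e => hi e.symm
      · intro i _; exact hπ2 i
    rw [h3, mul_one]
  -- the base candidate
  set c : Fin n → K := fun i =>
    if π i = i then (if hei q a i = 1 then 1 else s)
    else (if i < π i then 1 else hei q a i) with hcdef
  have hc : ∀ i, c i * c (π i) = hei q a i := by
    intro i
    by_cases hi : π i = i
    · rw [hi]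
      rw [hcdef]
      simp only [if_pos hi]
      by_cases h1 : hei q a i = 1
      · rw [if_pos h1, h1, mul_one]
      · rw [if_neg h1, ← sq, hs]
        rcases hsign i with h | h
        · exact absurd h h1
        · rw [h]
    · have hi' : ¬ π (π i) = π i := by rw [hπ2]; exact fun e => hi e.symm
      rw [hcdef]
      simp only [if_neg hi, if_neg hi']
      by_cases hlt : i < π i
      · rw [if_pos hlt, if_neg (by rw [hπ2]; exact not_lt.2 hlt.le), hHpi, one_mul]
      · have hlt2 : π i < i := lt_of_le_of_ne (not_lt.1 hlt) (fun e => hi e)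
        rw [if_neg hlt, if_pos (by rw [hπ2]; exact hlt2), mul_one]
  -- Case 1 : the union is nonempty
  have main1 : ({i : Fin n | π i = i ∧ hei q a i = 1 ∧ Even (a i)} ∪
        {i : Fin n | π i = i ∧ hei q a i = -1 ∧ Even (a i)}).Nonempty →
      ∃ c : Fin n → K, (∀ i, c i * c (π i) = hei q a i) ∧
        qPi q a π * ∏ i : Fin n, c i ^ (a i - 1) = 1 := by
    rintro ⟨i₀, hi₀⟩
    have hfix0 : π i₀ = i₀ ∧ Even (a i₀) := by
      rcases hi₀ with h | h
      · exact ⟨h.1, h.2.2⟩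
      · exact ⟨h.1, h.2.2⟩
    have hodd0 : Odd (a i₀ - 1) := (haodd i₀).1 hfix0.2
    have hsq1 : (qPi q a π * ∏ i, c i ^ (a i - 1)) * (qPi q a π * ∏ i, c i ^ (a i - 1)) = 1 := by
      have e1 : (qPi q a π * ∏ i, c i ^ (a i - 1)) * (qPi q a π * ∏ i, c i ^ (a i - 1))
          = (qPi q a π * qPi q a π) * ((∏ i, c i ^ (a i - 1)) * (∏ i, c i ^ (a i - 1))) := by
        ring
      rw [e1, hqPisq, hPsq c hc, hW1]
    rcases mul_self_eq_one_iff.1 hsq1 with h1 | h1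
    · exact ⟨c, hc, h1⟩
    · set c' : Fin n → K := Function.update c i₀ (-(c i₀)) with hc'def
      have hcc : ∀ j, j ≠ i₀ → c' j = c j := fun j hj => Function.update_of_ne hj _ _
      have hc'0 : c' i₀ = -(c i₀) := Function.update_self _ _ _
      have hc' : ∀ i, c' i * c' (π i) = hei q a i := by
        intro i
        by_cases hii : i = i₀
        · rw [hii, hfix0.1, hc'0, neg_mul_neg]
          have h2 := hc i₀
          rwa [hfix0.1] at h2
        · have hπi : π i ≠ i₀ := fun e => hii (by rw [← hπ2 i, e, hfix0.1])
          rw [hcc i hii, hcc (π i) hπi]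
          exact hc i
      have hP' : ∏ i, c' i ^ (a i - 1) = -∏ i, c i ^ (a i - 1) := by
        rw [← Finset.mul_prod_erase Finset.univ (fun i => c' i ^ (a i - 1)) (Finset.mem_univ i₀),
            ← Finset.mul_prod_erase Finset.univ (fun i => c i ^ (a i - 1)) (Finset.mem_univ i₀)]
        rw [hc'0, hodd0.neg_pow, neg_mul]
        congr 2
        apply Finset.prod_congr rfl
        intro j hj
        rw [hcc j (Finset.ne_of_mem_erase hj)]
      refine ⟨c', hc', ?_⟩
      rw [hP', mul_neg, h1, neg_neg]
  -- final case split
  rcases hcond with hne | hdvd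
  · exact main1 hne
  by_cases hne : ({i : Fin n | π i = i ∧ hei q a i = 1 ∧ Even (a i)} ∪
      {i : Fin n | π i = i ∧ hei q a i = -1 ∧ Even (a i)}).Nonempty
  · exact main1 hne
  -- every fixed point has even a i - 1
  have hfodd : ∀ i, π i = i → Even (a i - 1) := by
    intro i hi
    by_contra hcon
    have hev : Even (a i) := (haodd i).2 (Nat.not_even_iff_odd.1 hcon)
    apply hne
    rcases hsign i with h | h
    · exact ⟨i, Or.inl (show π i = i ∧ hei q a i = 1 ∧ Even (a i) from ⟨hi, h, hev⟩)⟩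
    · exact ⟨i, Or.inr (show π i = i ∧ hei q a i = -1 ∧ Even (a i) from ⟨hi, h, hev⟩)⟩
  have heven_pow_one : ∀ x : K, x * x = 1 → ∀ e : ℕ, Even e → x ^ e = 1 := by
    intro x hx e he
    obtain ⟨t, ht⟩ := he
    rw [ht, pow_add, ← mul_pow, hx, one_pow]
  have heifix1 : ∀ i, π i = i → hei q a i = 1 := by
    intro i hi
    rw [heiF i hi]
    apply Finset.prod_eq_one
    intro j hj
    have hjf : π j = j := by rw [hFfix, Finset.mem_filter] at hj; exact hj.2
    exact heven_pow_one _ (hqfixsq i j hi hjf) _ (hfodd j hjf)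
  have hqPi_one : qPi q a π = 1 := by
    rw [hqPi2]
    apply Finset.prod_eq_one
    intro p hp
    rw [hPf, Finset.mem_filter] at hp
    obtain ⟨-, -, h3, h4⟩ := hp
    show q p.2 p.1 ^ ((a p.2 - 1) * (a p.1 - 1)) = 1
    exact heven_pow_one _ (hqfixsq p.2 p.1 h4 h3) _ ((hfodd p.1 h3).mul_left _)
  have hcfix1 : ∀ i, π i = i → c i = 1 := by
    intro i hi
    simp only [hcdef]
    rw [if_pos hi, if_pos (heifix1 i hi)]
  have hPsplit : (∏ i, c i ^ (a i - 1)) =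
      ∏ i ∈ Finset.univ.filter (fun i => ¬ π i = i ∧ ¬ i < π i), hei q a i ^ (a i - 1) := by
    rw [← Finset.prod_filter_mul_prod_filter_not Finset.univ (fun i => ¬ π i = i ∧ ¬ i < π i)
      (fun i => c i ^ (a i - 1))]
    have hrest : ∏ i ∈ Finset.univ.filter (fun i => ¬(¬ π i = i ∧ ¬ i < π i)),
        c i ^ (a i - 1) = 1 := by
      apply Finset.prod_eq_one
      intro i hi
      rw [Finset.mem_filter] at hi
      have h2 := hi.2
      push_neg at h2
      by_cases hfx : π i = i
      · rw [hcfix1 i hfx, one_pow]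
      · have hlt : i < π i := h2 hfx
        simp only [hcdef]
        rw [if_neg hfx, if_pos hlt, one_pow]
    rw [hrest, mul_one]
    apply Finset.prod_congr rfl
    intro i hi
    rw [Finset.mem_filter] at hi
    obtain ⟨-, hnf, hnlt⟩ := hi
    simp only [hcdef]
    rw [if_neg hnf, if_neg hnlt]
  have hval : ∀ i ∈ Finset.univ.filter (fun i => ¬ π i = i ∧ ¬ i < π i),
      hei q a i ^ (a i - 1)
        = if hei q a i = -1 ∧ Odd (a i - 1) then (-1 : K) else 1 := by
    intro i _
    by_cases hcnd : hei q a i = -1 ∧ Odd (a i - 1)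
    · rw [if_pos hcnd, hcnd.1, hcnd.2.neg_pow, one_pow]
    · rw [if_neg hcnd]
      rcases hsign i with h | h
      · rw [h, one_pow]
      · have hev : Even (a i - 1) := by
          rcases Nat.even_or_odd (a i - 1) with he | ho
          · exact he
          · exact absurd ⟨h, ho⟩ hcnd
        rw [h, hev.neg_pow, one_pow]
  -- counting
  set Dm := (Finset.univ.filter (fun i : Fin n => ¬ π i = i ∧ ¬ i < π i)).filter
    (fun i => hei q a i = -1 ∧ Odd (a i - 1)) with hDm
  set Dq := (Finset.univ.filter (fun i : Fin n => ¬ π i = i ∧ i < π i)).filter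
    (fun i => hei q a i = -1 ∧ Odd (a i - 1)) with hDq
  set J := Finset.univ.filter (fun i : Fin n => π i ≠ i ∧ hei q a i = -1 ∧ Even (a i)) with hJ
  have hJcard : ({i : Fin n | π i ≠ i ∧ hei q a i = -1 ∧ Even (a i)}).ncard = J.card := by
    rw [Set.ncard_eq_toFinset_card', hJ]
    congr 1
    simp [Set.toFinset_setOf]
  have hJunion : J = Dm ∪ Dq := by
    ext i
    rw [hJ, hDm, hDq]
    simp only [Finset.mem_union, Finset.mem_filter, Finset.mem_univ, true_and]
    constructor
    · rintro ⟨h1, h2, h3⟩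
      by_cases hlt : i < π i
      · exact Or.inr ⟨⟨h1, hlt⟩, h2, (haodd i).1 h3⟩
      · exact Or.inl ⟨⟨h1, hlt⟩, h2, (haodd i).1 h3⟩
    · rintro (⟨⟨h1, -⟩, h2, h3⟩ | ⟨⟨h1, -⟩, h2, h3⟩) <;>
        exact ⟨h1, h2, (haodd i).2 h3⟩
  have hdisj : Disjoint Dm Dq := by
    rw [Finset.disjoint_left]
    intro i hi1 hi2
    rw [hDm, Finset.mem_filter, Finset.mem_filter] at hi1
    rw [hDq, Finset.mem_filter, Finset.mem_filter] at hi2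
    exact hi1.1.2.2 hi2.1.2.2
  have hbij : Dq.card = Dm.card := by
    apply Finset.card_bij (fun i _ => π i)
    · intro i hi
      rw [hDq, Finset.mem_filter, Finset.mem_filter] at hi
      obtain ⟨⟨-, hnf, hlt⟩, hm, ho⟩ := hi
      rw [hDm, Finset.mem_filter, Finset.mem_filter]
      refine ⟨⟨Finset.mem_univ _, ?_, ?_⟩, ?_, ?_⟩
      · rw [hπ2]; exact fun e => hnf e.symm
      · rw [hπ2]; exact not_lt.2 hlt.le
      · rw [hHpi]; exact hm
      · rw [hca]; exact ho
    · intro i _ j _ he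
      exact π.injective he
    · intro j hj
      rw [hDm, Finset.mem_filter, Finset.mem_filter] at hj
      obtain ⟨⟨-, hnf, hnlt⟩, hm, ho⟩ := hj
      refine ⟨π j, ?_, hπ2 j⟩
      rw [hDq, Finset.mem_filter, Finset.mem_filter]
      refine ⟨⟨Finset.mem_univ _, ?_, ?_⟩, ?_, ?_⟩
      · rw [hπ2]; exact fun e => hnf e.symm
      · rw [hπ2]; exact lt_of_le_of_ne (not_lt.1 hnlt) (fun e => hnf e)
      · rw [hHpi]; exact hm
      · rw [hca]; exact ho
  have hDmEven : Even Dm.card := by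
    have hc1 : J.card = Dm.card + Dq.card := by
      rw [hJunion, Finset.card_union_of_disjoint hdisj]
    rw [hJcard, hc1, hbij] at hdvd
    rw [Nat.even_iff]
    omega
  refine ⟨c, hc, ?_⟩
  rw [hqPi_one, one_mul, hPsplit, Finset.prod_congr rfl hval, Finset.prod_ite,
    Finset.prod_const, Finset.prod_const_one, mul_one, ← hDm]
  rw [hDmEven.neg_one_pow]
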